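/- arXiv:2311.09460 — 6 statements merged into one kernel-verified Lean document; each statement's English description precedes it below -/
import Mathlib

section
/- For all real γ ≥ 0, (e^γ − 1)² / (e^{2γ} − (1 + γ/4)²) ≤ (3/2)·γ, where for γ = 0 the left-hand side is interpreted as its limit 0 (equivalently: (e^γ − 1)² ≤ (3/2)γ·(e^{2γ} − (1 + γ/4)²) for all γ ≥ 0). -/
/-!
With `x = e^γ`, the Padé bound `e^γ ≤ (2 + γ)/(2 - γ)` says `2(x - 1) ≤ γ(x + 1)`, so
`(x - 1)² ≤ γ(x² - 1)/2`. It remains to see `x² - 1 ≤ 3(x² - (1 + γ/4)²)`, i.e.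
`3(1 + γ/4)² ≤ 2x² + 1`, which already follows from `x ≥ 1 + γ`.
-/

open Real

lemma Real.two_sub_mul_exp_le_two_add {x : ℝ} (hx : 0 ≤ x) : (2 - x) * exp x ≤ 2 + x := by
  rcases lt_or_ge x 2 with hx2 | hx2
  · rw [← le_div_iff₀' (by linarith)]
    exact exp_le_two_add_div_two_sub hx hx2
  · nlinarith [exp_pos x]

lemma sub_one_sq_le_of_pade_bounds {γ x : ℝ} (hγ : 0 ≤ γ) (hlin : 1 + γ ≤ x)
    (hpade : 2 * (x - 1) ≤ γ * (x + 1)) :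
    (x - 1) ^ 2 ≤ (3 / 2) * γ * (x ^ 2 - (1 + γ / 4) ^ 2) := by
  have hx : 0 ≤ x - 1 := by linarith
  have hsq : 3 * (1 + γ / 4) ^ 2 ≤ 2 * x ^ 2 + 1 := by nlinarith
  calc (x - 1) ^ 2 ≤ γ * (x ^ 2 - 1) / 2 := by nlinarith [mul_le_mul_of_nonneg_left hpade hx]
    _ ≤ (3 / 2) * γ * (x ^ 2 - (1 + γ / 4) ^ 2) := by
      nlinarith [mul_nonneg hγ (sub_nonneg.2 hsq)]

theorem exp_ratio_ineq (γ : ℝ) (hγ : 0 ≤ γ) :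
    (Real.exp γ - 1)^2 ≤ (3/2) * γ * (Real.exp (2*γ) - (1 + γ/4)^2) := by
  have hexp_two_mul : exp (2 * γ) = exp γ ^ 2 := by rw [← exp_nat_mul]; norm_num
  rw [hexp_two_mul]
  apply sub_one_sq_le_of_pade_bounds hγ (by linarith [add_one_le_exp γ])
  linarith [two_sub_mul_exp_le_two_add hγ]
end

section
/- With the above definitions, c² ≤ ((b² − 1)/b²)·(a² − b²). -/
set_option maxHeartbeats 1000000

private lemma exp_upper_cubic {t : ℝ} (h0 : 0 ≤ t) (h1 : t ≤ 1) :
    Real.exp t ≤ 1 + t + t^2/2 + (2/9) * t^3 := by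
  have h := Real.exp_bound' h0 h1 (n := 3) (by norm_num)
  rw [show (3:ℕ) = 2+1 by rfl] at h
  simp [Finset.sum_range_succ, Nat.factorial] at h
  nlinarith [h]

private lemma case2 (t s u a : ℝ) (ht : 0 ≤ t) (ht1 : t ≤ 1) (hs : 1 ≤ s)
    (hst : s ≤ 1 + t) (hu : 0 ≤ u) (h4 : 4*u ≤ s - 1)
    (hL : 1 + t + t^2/2 ≤ a) (hU : a ≤ 1 + t + t^2/2 + (2/9)*t^3) :
    (a - s)^2 * (s+u)^2 ≤ t * (2*s+u) * (a*s - (s+u)) * (a*s + (s+u)) := by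
  have hq0 : t ≤ a - 1 := by nlinarith
  have hq2 : a - 1 ≤ (31/18)*t := by nlinarith
  have hps : 0 ≤ s - 1 := by linarith
  have ha1 : (0:ℝ) ≤ a - 1 := by linarith
  have has : 0 ≤ a - s := by nlinarith
  have e1 : (a - s)^2 * (s+u)^2 ≤ (a-1)^2 * (s*(1+(s-1)/4))^2 := by
    have h1 : (a - s)^2 ≤ (a-1)^2 := by nlinarith
    have h2f : s + u ≤ s*(1+(s-1)/4) := by nlinarith [mul_nonneg hps hps]
    have h2 : (s+u)^2 ≤ (s*(1+(s-1)/4))^2 := by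
      nlinarith [h2f, mul_nonneg (by linarith : (0:ℝ) ≤ s + u) (sub_nonneg.2 h2f)]
    calc (a - s)^2 * (s+u)^2 ≤ (a-1)^2 * (s+u)^2 :=
          mul_le_mul_of_nonneg_right h1 (sq_nonneg _)
      _ ≤ (a-1)^2 * (s*(1+(s-1)/4))^2 := mul_le_mul_of_nonneg_left h2 (sq_nonneg _)
  have hX : (1+(s-1)/4)^2 ≤ 25/16 := by nlinarith
  have hin : (a-1)*(1+(s-1)/4)^2 ≤ 3*t := by
    nlinarith [mul_nonneg (sub_nonneg.2 hq2) (sq_nonneg (1+(s-1)/4)),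
      mul_nonneg ht (sub_nonneg.2 hX)]
  have e3 : (a-1)^2 * (s*(1+(s-1)/4))^2 ≤ 3*t*s^2*(a-1) := by
    nlinarith [mul_nonneg (mul_nonneg (sq_nonneg s) ha1) (sub_nonneg.2 hin)]
  have f2 : (3/4)*(a-1) ≤ a*s - (s+u) := by
    nlinarith [mul_nonneg hps ha1]
  have f20 : (0:ℝ) ≤ a*s - (s+u) := by linarith
  have f3 : 2*s ≤ a*s + (s+u) := by nlinarith
  have h12 : t*(2*s)*((3/4)*(a-1)) ≤ t*(2*s+u)*(a*s - (s+u)) := by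
    have g1 : t*(2*s) ≤ t*(2*s+u) := by nlinarith [mul_nonneg ht hu]
    have g2 : (0:ℝ) ≤ t*(2*s+u) := by nlinarith [mul_nonneg ht hu, mul_nonneg ht (by linarith : (0:ℝ) ≤ s)]
    exact mul_le_mul g1 f2 (by linarith) g2
  have e2 : 3*t*s^2*(a-1) ≤ t*(2*s+u)*(a*s - (s+u))*(a*s + (s+u)) := by
    have hnn : (0:ℝ) ≤ t*(2*s)*((3/4)*(a-1)) := by
      apply mul_nonneg; apply mul_nonneg ht; linarith; linarith
    have step : t*(2*s)*((3/4)*(a-1))*(2*s) ≤ t*(2*s+u)*(a*s - (s+u))*(a*s + (s+u)) :=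
      calc t*(2*s)*((3/4)*(a-1))*(2*s)
          ≤ t*(2*s)*((3/4)*(a-1))*(a*s + (s+u)) := mul_le_mul_of_nonneg_left f3 hnn
        _ ≤ t*(2*s+u)*(a*s - (s+u))*(a*s + (s+u)) :=
            mul_le_mul_of_nonneg_right h12 (by linarith)
    nlinarith [step]
  linarith [e1, e3, e2]

private lemma case1 (t s u a : ℝ) (ht : 1 ≤ t) (hs : 1 ≤ s) (hst : s ≤ 1 + t)
    (hu : 0 ≤ u) (h4 : 4*u ≤ s - 1) (hL : 1 + t + t^2/2 ≤ a) :
    (a - s)^2 * (s+u)^2 ≤ t * (2*s+u) * (a*s - (s+u)) * (a*s + (s+u)) := by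
  have ht0 : (0:ℝ) ≤ t := by linarith
  have hA : (s+u)^2 ≤ t * (2*s+u) * s^2 := by
    nlinarith [mul_nonneg (by linarith : (0:ℝ) ≤ t - 1) (by nlinarith : (0:ℝ) ≤ (2*s+u)*s^2),
      mul_nonneg (sub_nonneg.2 hs) (sq_nonneg s),
      mul_nonneg hu (by nlinarith : (0:ℝ) ≤ s^2 - u),
      mul_nonneg (by linarith : (0:ℝ) ≤ s) (by linarith : (0:ℝ) ≤ s - 1 - 4*u),
      mul_nonneg (mul_nonneg (sub_nonneg.2 hs) (by linarith : (0:ℝ) ≤ s))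
        (by linarith : (0:ℝ) ≤ 4*s - 1)]
  have hLs : s ≤ 1 + t + t^2/2 := by nlinarith
  have hB2 : (s+u)^2 ≤ (25/16)*s^2 := by
    nlinarith [mul_nonneg (by linarith : (0:ℝ) ≤ 5*s - 4*(s+u)) (by linarith : (0:ℝ) ≤ 5*s + 4*(s+u))]
  have hL52 : (5:ℝ)/2 ≤ 1 + t + t^2/2 := by nlinarith
  have hX : (0:ℝ) ≤ (1 + t + t^2/2)^2 - 25/16 := by nlinarith
  have h1 : s^2*((1 + t + t^2/2)^2 - 25/16) ≤ (1 + t + t^2/2)^2*s^2 - (s+u)^2 := by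
    nlinarith [hB2]
  have h2 : ((1 + t + t^2/2) - s)^2 ≤ (t + t^2/2)^2 := by nlinarith
  have hg : (25/16)*(t + t^2/2)^2 ≤ 2*t*((1 + t + t^2/2)^2 - 25/16) := by
    nlinarith [mul_nonneg (by linarith : (0:ℝ) ≤ t - 1) ht0,
      mul_nonneg (mul_nonneg ht0 ht0) ht0,
      mul_nonneg (mul_nonneg (mul_nonneg ht0 ht0) ht0) ht0,
      mul_nonneg (mul_nonneg (mul_nonneg (mul_nonneg ht0 ht0) ht0) ht0) ht0]
  have hFL : ((1 + t + t^2/2) - s)^2 * (s+u)^2 ≤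
      t * (2*s+u) * ((1 + t + t^2/2)*s - (s+u)) * ((1 + t + t^2/2)*s + (s+u)) := by
    nlinarith [mul_nonneg (mul_nonneg ht0 hu) (by nlinarith [hB2, hX, sq_nonneg s] :
        (0:ℝ) ≤ (1 + t + t^2/2)^2*s^2 - (s+u)^2),
      mul_nonneg (mul_nonneg ht0 (by linarith : (0:ℝ) ≤ 2*s)) (sub_nonneg.2 h1),
      mul_nonneg (sq_nonneg (t + t^2/2)) (by nlinarith [hB2] : (0:ℝ) ≤ (25/16)*s^2 - (s+u)^2),
      mul_nonneg (sub_nonneg.2 h2) (sq_nonneg (s+u)),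
      mul_nonneg (mul_nonneg (mul_nonneg (mul_nonneg ht0 (by norm_num : (0:ℝ) ≤ 2))
        (sub_nonneg.2 hs)) (sq_nonneg s)) hX,
      mul_nonneg (sub_nonneg.2 hg) (sq_nonneg s)]
  nlinarith [hFL,
    mul_nonneg (sub_nonneg.2 hL) (mul_nonneg (sub_nonneg.2 hA)
      (by nlinarith : (0:ℝ) ≤ a + (1 + t + t^2/2))),
    mul_nonneg (sub_nonneg.2 hL) (mul_nonneg (by linarith : (0:ℝ) ≤ 2*s) (sq_nonneg (s+u)))]

private lemma key (α t a : ℝ) (hα0 : 0 < α) (hα : α ≤ 1/2) (ht : 0 ≤ t)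
    (ha : a = Real.exp t) :
    (a - (1+2*α*t))^2 * ((1+2*α*t) + α^2*t)^2 ≤
      t * (2*(1+2*α*t) + α^2*t) * (a*(1+2*α*t) - ((1+2*α*t)+α^2*t)) *
        (a*(1+2*α*t) + ((1+2*α*t)+α^2*t)) := by
  have hL : 1 + t + t^2/2 ≤ a := ha ▸ Real.quadratic_le_exp_of_nonneg ht
  have hs : 1 ≤ 1+2*α*t := by nlinarith
  have hst : 1+2*α*t ≤ 1 + t := by nlinarith
  have hu : 0 ≤ α^2*t := by positivity
  have h4 : 4*(α^2*t) ≤ (1+2*α*t) - 1 := by nlinarith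
  rcases le_or_gt t 1 with hcase | hcase
  · have hU : a ≤ 1 + t + t^2/2 + (2/9)*t^3 := ha ▸ exp_upper_cubic ht hcase
    exact case2 t (1+2*α*t) (α^2*t) a ht hcase hs hst hu h4 hL hU
  · exact case1 t (1+2*α*t) (α^2*t) a hcase.le hs hst hu h4 hL

theorem pty_outer (α γ a α' b c : ℝ)
    (hα0 : 0 < α) (hα : α ≤ 1/2) (hγ : 0 ≤ γ)
    (ha : a = Real.exp γ)
    (hα' : α' = 1 / (1/α + 2*γ))
    (hb : b = 1 + (α - α')/2)
    (hc : c = -α + α' * a) :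
    c^2 ≤ ((b^2 - 1)/b^2) * (a^2 - b^2) := by
  have hs0 : (0:ℝ) < 1 + 2*α*γ := by nlinarith
  have hα'2 : α' = α / (1 + 2*α*γ) := by
    have hd : 1/α + 2*γ = (1+2*α*γ)/α := by field_simp
    rw [hα', hd, one_div_div]
  have hb2 : b = (1 + 2*α*γ + α^2*γ) / (1 + 2*α*γ) := by
    rw [hb, hα'2]; field_simp; ring
  have hc2 : c = α * (a - (1+2*α*γ)) / (1 + 2*α*γ) := by
    rw [hc, hα'2]; field_simp; ring
  have hbpos : (0:ℝ) < b := by rw [hb2]; positivity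
  have K := key α γ a hα0 hα hγ ha
  have hgoal : ((b^2 - 1) * (a^2 - b^2) - c^2 * b^2) * (1+2*α*γ)^4
      = α^2 * ((γ * (2*(1+2*α*γ) + α^2*γ) * (a*(1+2*α*γ) - ((1+2*α*γ)+α^2*γ)) *
          (a*(1+2*α*γ) + ((1+2*α*γ)+α^2*γ)))
        - (a - (1+2*α*γ))^2 * ((1+2*α*γ) + α^2*γ)^2) := by
    rw [hb2, hc2]; field_simp; ring
  have h5 : 0 ≤ ((b^2 - 1) * (a^2 - b^2) - c^2 * b^2) * (1+2*α*γ)^4 := by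
    rw [hgoal]
    exact mul_nonneg (sq_nonneg α) (sub_nonneg.2 K)
  have h6 : 0 ≤ (b^2 - 1) * (a^2 - b^2) - c^2 * b^2 := by
    have hp : (0:ℝ) < (1+2*α*γ)^4 := by positivity
    nlinarith [h5, hp]
  calc c^2 ≤ (b^2 - 1) * (a^2 - b^2) / b^2 := by
        rw [le_div_iff₀ (by positivity : (0:ℝ) < b^2)]; linarith
    _ = ((b^2 - 1)/b^2) * (a^2 - b^2) := by ring
end

section
/- With the above definitions, b²·(1 + α' − 2α/a) ≤ (α²/α'²)·(1 − α'). -/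
/-!
With `t = 2αγ` one has `α = α'(1 + t)`, so `α²/α'² = (1 + t)²` and `b = 1 + α't/2`. The bound
`e^{-γ} ≥ 1 - γ` reduces the claim to a polynomial inequality in `α'` and `t`, whose two sides differ
by `t` times a quadratic in `t`; its only negative term is absorbed using `α'(1 + t) = α ≤ 1/2`.
-/

lemma one_add_half_mul_sq_mul_le {s t : ℝ} (hs : 0 ≤ s) (ht : 0 ≤ t) (hst : s * (1 + t) ≤ 1 / 2) :
    (1 + s * t / 2) ^ 2 * (1 - s + t * (1 - 2 * s)) ≤ (1 + t) ^ 2 * (1 - s) := by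
  have hs2 : 0 ≤ 1 - 2 * s := by nlinarith
  -- the cubic term is dominated by the quadratic one, since `s * (s * t) ≤ 1 / 4`
  have hcubic : t * (s ^ 2 * (1 - 2 * s) / 4) ≤ 1 - 2 * s := by
    have : s * (s * t) ≤ 1 / 4 := by nlinarith
    nlinarith
  have hbracket : 0 ≤ 1 - s + s ^ 2 + t * (1 - 2 * s + 7 * s ^ 2 / 4 + s ^ 3 / 4)
      - t ^ 2 * (s ^ 2 * (1 - 2 * s) / 4) := by
    nlinarith [mul_le_mul_of_nonneg_left hcubic ht, pow_nonneg hs 3]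
  nlinarith [mul_nonneg ht hbracket]

lemma two_mul_sub_le_div_exp {α γ : ℝ} (hα : 0 ≤ α) :
    2 * α - 2 * α * γ ≤ 2 * α / Real.exp γ := by
  rw [div_eq_mul_inv, ← Real.exp_neg]
  nlinarith [Real.add_one_le_exp (-γ)]

theorem pty_inner_main (α γ a α' b : ℝ)
    (hα0 : 0 < α) (hα : α ≤ 1/2) (hγ : 0 ≤ γ)
    (ha : a = Real.exp γ)
    (hα' : α' = 1 / (1/α + 2*γ))
    (hb : b = 1 + (α - α')/2) :
    b^2 * (1 + α' - 2*α/a) ≤ (α^2/α'^2) * (1 - α') := by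
  set t := 2 * α * γ with ht
  have ht0 : 0 ≤ t := by positivity
  have hα'0 : 0 < α' := by rw [hα']; positivity
  have hαt : α = α' * (1 + t) := by rw [hα', ht]; field_simp
  have hb' : b = 1 + α' * t / 2 := by rw [hb, hαt]; ring
  have hratio : α ^ 2 / α' ^ 2 = (1 + t) ^ 2 := by rw [hαt]; field_simp
  calc b^2 * (1 + α' - 2*α/a)
      ≤ b ^ 2 * (1 + α' - (2 * α - t)) := by
        rw [ha]; gcongr; exact two_mul_sub_le_div_exp hα0.le
    _ = (1 + α' * t / 2) ^ 2 * (1 - α' + t * (1 - 2 * α')) := by rw [hb', hαt]; ring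
    _ ≤ (1 + t) ^ 2 * (1 - α') := one_add_half_mul_sq_mul_le hα'0.le ht0 (hαt ▸ hα)
    _ = (α^2/α'^2) * (1 - α') := by rw [hratio]
end

section
/- With the above definitions, a − α'·a·√((1+r)/r) ≥ 0, where r = (a²·ℓ₁²)/(b²·ℓ₂²), ℓ₁ = 1/(c+a), and ℓ₂ = √(1/α² − 1/(c+a)²). -/
private lemma keyclean (α γ a : ℝ) (hα0 : 0 < α) (hα : α ≤ 1/2) (hγ : 0 ≤ γ)
    (ha1 : 1 ≤ a) (hag : a*(1-γ) ≤ 1) :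
    (2+2*(2*α*γ)+α*(2*α*γ))^2 * (a*(1+2*α*γ+α) - 2*α*(1+2*α*γ))
      ≤ 4*a*(1+2*α*γ)^4*(1+2*α*γ-α) := by
  have ha0 : (0:ℝ) < a := lt_of_lt_of_le one_pos ha1
  set P : ℝ := 4*(1+2*α*γ)^4*(1+2*α*γ-α) - (2+2*(2*α*γ)+α*(2*α*γ))^2*(1+2*α*γ+α) with hP
  set Q : ℝ := 2*α*(1+2*α*γ)*(2+2*(2*α*γ)+α*(2*α*γ))^2 with hQ
  have hG : 0 ≤ 8*α*(1-α+α^2) + γ*α^2*(64-64*α+44*α^2+4*α^3)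
      + γ^2*α^3*(192-160*α+48*α^2+16*α^3) + γ^3*α^4*(256-128*α-16*α^2)
      + γ^4*(128*α^5) := by
    have h1 : 0 ≤ 8*α*(1-α+α^2) := by nlinarith
    have h2 : 0 ≤ γ*α^2*(64-64*α+44*α^2+4*α^3) := by
      apply mul_nonneg (mul_nonneg hγ (by positivity)); nlinarith
    have h3 : 0 ≤ γ^2*α^3*(192-160*α+48*α^2+16*α^3) := by
      apply mul_nonneg (mul_nonneg (by positivity) (by positivity)); nlinarith
    have h4 : 0 ≤ γ^3*α^4*(256-128*α-16*α^2) := by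
      apply mul_nonneg (mul_nonneg (by positivity) (by positivity)); nlinarith
    have h5 : 0 ≤ γ^4*(128*α^5) := by positivity
    linarith
  have hPQ : 0 ≤ P + Q*(1-γ) := by
    have e : P + Q*(1-γ) = γ*(8*α*(1-α+α^2) + γ*α^2*(64-64*α+44*α^2+4*α^3)
      + γ^2*α^3*(192-160*α+48*α^2+16*α^3) + γ^3*α^4*(256-128*α-16*α^2)
      + γ^4*(128*α^5)) := by rw [hP, hQ]; ring
    rw [e]; exact mul_nonneg hγ hG
  have hQ0 : 0 ≤ Q := by rw [hQ]; positivity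
  have key : 0 ≤ a*P + Q := by
    nlinarith [mul_nonneg ha0.le hPQ, mul_nonneg hQ0 (by linarith : (0:ℝ) ≤ 1 - a*(1-γ))]
  nlinarith [key]

set_option maxHeartbeats 1000000 in
theorem pty_inner (α γ a α' b c ℓ₁ ℓ₂ r : ℝ)
    (hα0 : 0 < α) (hα : α ≤ 1/2) (hγ : 0 ≤ γ)
    (ha : a = Real.exp γ)
    (hα' : α' = 1 / (1/α + 2*γ))
    (hb : b = 1 + (α - α')/2)
    (hc : c = -α + α' * a)
    (hℓ₁ : ℓ₁ = 1 / (c + a))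
    (hℓ₂ : ℓ₂ = Real.sqrt (1/α^2 - 1/(c + a)^2))
    (hr : r = (a^2 * ℓ₁^2) / (b^2 * ℓ₂^2)) :
    0 ≤ a - α' * a * Real.sqrt ((1 + r)/r) := by
  have ha0 : (0:ℝ) < a := ha ▸ Real.exp_pos γ
  have ha1 : (1:ℝ) ≤ a := by rw [ha]; exact Real.one_le_exp hγ
  have hag : a*(1-γ) ≤ 1 := by
    have h1 : 1 - γ ≤ Real.exp (-γ) := by linarith [Real.add_one_le_exp (-γ)]
    have h2 : a * (1-γ) ≤ a * Real.exp (-γ) := mul_le_mul_of_nonneg_left h1 ha0.le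
    have h3 : a * Real.exp (-γ) = 1 := by rw [ha, ← Real.exp_add]; simp
    linarith
  have hu0 : (0:ℝ) < 1/α + 2*γ := by positivity
  have hα'pos : 0 < α' := by rw [hα']; positivity
  have hu : (0:ℝ) < 1 + 2*α*γ := by positivity
  have hα'val : α' = α / (1 + 2*α*γ) := by
    rw [hα']; rw [div_eq_div_iff (ne_of_gt hu0) (ne_of_gt hu)]; field_simp
  have hu1 : (1:ℝ) ≤ 1 + 2*α*γ := by nlinarith
  have hα'le : α' ≤ α := by
    rw [hα'val]; rw [div_le_iff₀ hu]; nlinarith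
  have hbpos : (1:ℝ) ≤ b := by rw [hb]; linarith
  have hα'a : α' ≤ α' * a := by nlinarith
  have hsα : α < c + a := by rw [hc]; nlinarith
  have hs0 : 0 < c + a := lt_trans hα0 hsα
  have hgap : 0 < 1/α^2 - 1/(c+a)^2 := by
    have h1 : α^2 < (c+a)^2 := by
      have := pow_lt_pow_left₀ hsα hα0.le (two_ne_zero)
      linarith
    have h2 : 1/(c+a)^2 < 1/α^2 := one_div_lt_one_div_of_lt (by positivity) h1
    linarith
  have hℓ₂pos : 0 < ℓ₂ := by rw [hℓ₂]; exact Real.sqrt_pos.mpr hgap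
  have hℓ₂sq : ℓ₂^2 = 1/α^2 - 1/(c+a)^2 := by rw [hℓ₂, Real.sq_sqrt hgap.le]
  have hℓ₁pos : 0 < ℓ₁ := by rw [hℓ₁]; positivity
  have hr0 : 0 < r := by
    rw [hr]
    exact div_pos (by positivity) (by positivity)
  have hD0 : 0 < (c+a)^2 - α^2 := by
    have := pow_lt_pow_left₀ hsα hα0.le (two_ne_zero)
    linarith
  have hrval : r = a^2*α^2 / (b^2*((c+a)^2-α^2)) := by
    rw [hr, hℓ₁, hℓ₂sq]
    have hb0 : b ≠ 0 := by positivity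
    have hs : (c+a) ≠ 0 := ne_of_gt hs0
    have hα0' : α ≠ 0 := ne_of_gt hα0
    have hD : (c+a)^2 - α^2 ≠ 0 := ne_of_gt hD0
    field_simp
  -- the key polynomial inequality
  have key : α'^2*b^2*((c+a)^2-α^2) ≤ α^2*a^2*(1-α'^2) := by
    have kc := keyclean α γ a hα0 hα hγ ha1 hag
    have h4 : 0 ≤ α^2*(a*(1+2*α*γ+α)) *
        (4*a*(1+2*α*γ)^4*(1+2*α*γ-α)
          - (2+2*(2*α*γ)+α*(2*α*γ))^2 * (a*(1+2*α*γ+α) - 2*α*(1+2*α*γ))) := by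
      apply mul_nonneg (by positivity) (by linarith)
    rw [hα'val, hb, hα'val, hc, hα'val]
    rw [← sub_nonneg]
    have hu' : (1+2*α*γ) ≠ 0 := ne_of_gt hu
    have e : α^2*a^2*(1-(α/(1+2*α*γ))^2)
        - (α/(1+2*α*γ))^2*(1 + (α - α/(1+2*α*γ))/2)^2
          * ((-α + α/(1+2*α*γ)*a + a)^2 - α^2)
        = (α^2*(a*(1+2*α*γ+α)) *
            (4*a*(1+2*α*γ)^4*(1+2*α*γ-α)
              - (2+2*(2*α*γ)+α*(2*α*γ))^2 * (a*(1+2*α*γ+α) - 2*α*(1+2*α*γ))))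
            / (4*(1+2*α*γ)^6) := by
      field_simp
      ring
    rw [e]
    positivity
  -- from key to the sqrt bound
  have hsqle : Real.sqrt ((1+r)/r) ≤ 1/α' := by
    have h1 : (1+r)/r ≤ (1/α')^2 := by
      rw [div_le_iff₀ hr0]
      have hDpos : 0 < b^2*((c+a)^2-α^2) := by positivity
      have e2 : (1/α')^2 * r - (1+r)
          = (α^2*a^2*(1-α'^2) - α'^2*b^2*((c+a)^2-α^2))
              / (α'^2*(b^2*((c+a)^2-α^2))) := by
        rw [hrval]
        have hα'0 : α' ≠ 0 := ne_of_gt hα'pos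
        have hb0 : b ≠ 0 := by positivity
        have hD : (c+a)^2 - α^2 ≠ 0 := ne_of_gt hD0
        field_simp
        ring
      have : 0 ≤ (1/α')^2 * r - (1+r) := by
        rw [e2]
        apply div_nonneg (by linarith) (by positivity)
      linarith
    calc Real.sqrt ((1+r)/r) ≤ Real.sqrt ((1/α')^2) := Real.sqrt_le_sqrt h1
      _ = 1/α' := Real.sqrt_sq (by positivity)
  have h5 : α' * a * Real.sqrt ((1+r)/r) ≤ α' * a * (1/α') := by
    apply mul_le_mul_of_nonneg_left hsqle (by positivity)
  have h6 : α' * a * (1/α') = a := by field_simp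
  linarith
end

section
/- Let α ≥ 1/2·α' > 0 with α' ≤ α ≤ 1, and suppose reals a, c satisfy c ≥ α'·a − α, c + a > 2, and c + α'·a ≤ (11/10)·α. Then c > 0 and 1/α' ≥ (10/11)·a·(1/α). Moreover, if additionally a ≥ 3/2 then 1/α' − 1/α ≥ (4/11)·(1/α). -/
/-- Case I of the two-dimensional lower bound analysis. -/
theorem lb_case_I (α α' a c : ℝ)
    (hα'0 : 0 < α') (hhalf : (1/2) * α ≤ α')
    (hα'α : α' ≤ α) (hα1 : α ≤ 1)
    (h1 : α' * a - α ≤ c) (h2 : 2 < c + a) (h3 : c + α' * a ≤ (11/10) * α) :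
    0 < c ∧ (10/11) * a * (1/α) ≤ 1/α' ∧
      (3/2 ≤ a → (4/11) * (1/α) ≤ 1/α' - 1/α) := by
  have hα : 0 < α := lt_of_lt_of_le hα'0 hα'α
  have hc : 0 < c := by nlinarith
  have key : 10 * (α' * a) ≤ 11 * α := by nlinarith
  have h2nd : (10/11) * a * (1/α) ≤ 1/α' := by
    rw [show (10/11) * a * (1/α) = (10 * a) / (11 * α) by ring,
      div_le_div_iff₀ (by positivity) hα'0]
    nlinarith
  refine ⟨hc, h2nd, fun ha => ?_⟩
  have h1α : 0 < 1/α := by positivity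
  nlinarith [h2nd, ha, h1α]
end

section
/- Let α ∈ (0,1], c ∈ ℝ with c ≤ 2, and suppose an ellipse c + α'·E' with vertical semiaxis α'·b is contained in the convex hull of the disk of radius α centered at the origin and the point (2,0) in ℝ². Then α'·b ≤ (2 − c)·(α/2)/√(1 − (α/2)²), i.e., the vertical semiaxis is at most (2−c)·tan φ where sin φ = α/2. -/
open Metric

/-- A point of `EuclideanSpace ℝ (Fin 2)` from its two coordinates. -/
noncomputable def pt (x y : ℝ) : EuclideanSpace ℝ (Fin 2) :=
  (WithLp.equiv 2 (Fin 2 → ℝ)).symm ![x, y]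

lemma pt_apply0 (x y : ℝ) : pt x y 0 = x := rfl
lemma pt_apply1 (x y : ℝ) : pt x y 1 = y := rfl

/-- If the axis-aligned ellipse centered at `(c,0)` with semiaxes `α'·a` and
`α'·b` is contained in the convex hull of the disk of radius `α` around the
origin and the point `(2,0)`, then its vertical semiaxis `α'·b` is at most
`(2-c)·(α/2)/√(1-(α/2)²)`. -/
theorem inner_ellipse_vertical_semiaxis_bound (α α' a b c : ℝ)
    (hα0 : 0 < α) (hα1 : α ≤ 1) (hα' : 0 < α') (ha : 0 < a) (hb : 0 < b)
    (hc : c ≤ 2)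
    (hsub : {p : EuclideanSpace ℝ (Fin 2) |
        ((p 0 - c) / (α' * a))^2 + (p 1 / (α' * b))^2 ≤ 1} ⊆
      convexHull ℝ (closedBall (0 : EuclideanSpace ℝ (Fin 2)) α ∪ {pt 2 0})) :
    α' * b ≤ (2 - c) * (α/2) / Real.sqrt (1 - (α/2)^2) := by
  set s := Real.sqrt (1 - (α/2)^2) with hs
  have hs2 : s^2 = 1 - (α/2)^2 := by
    rw [hs]
    apply Real.sq_sqrt
    nlinarith
  have hspos : 0 < s := by
    rw [hs]
    apply Real.sqrt_pos.2
    nlinarith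
  set t := (α/2) / s with ht
  have htpos : 0 < t := div_pos (by linarith) hspos
  -- the point (c, α'*b) is in the ellipse
  have hmem : pt c (α' * b) ∈ {p : EuclideanSpace ℝ (Fin 2) |
      ((p 0 - c) / (α' * a))^2 + (p 1 / (α' * b))^2 ≤ 1} := by
    simp only [Set.mem_setOf_eq, pt_apply0, pt_apply1, sub_self]
    rw [div_self (by positivity)]
    norm_num
  have hhull := hsub hmem
  -- the halfspace
  have hlin : IsLinearMap ℝ (fun p : EuclideanSpace ℝ (Fin 2) => p 1 + t * p 0) := by
    constructor
    · intro p q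
      simp only [PiLp.add_apply]
      ring
    · intro r p
      simp only [PiLp.smul_apply, smul_eq_mul]
      ring
  have hconv : Convex ℝ {p : EuclideanSpace ℝ (Fin 2) | p 1 + t * p 0 ≤ 2 * t} :=
    convex_halfSpace_le hlin (2 * t)
  have hsubset : closedBall (0 : EuclideanSpace ℝ (Fin 2)) α ∪ {pt 2 0} ⊆
      {p : EuclideanSpace ℝ (Fin 2) | p 1 + t * p 0 ≤ 2 * t} := by
    rintro p (hp | hp)
    · have hnorm : ‖p‖ ≤ α := by
        rwa [mem_closedBall_zero_iff] at hp
      have hsum : (p 0)^2 + (p 1)^2 ≤ α^2 := by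
        have := EuclideanSpace.norm_eq p
        rw [Fin.sum_univ_two] at this
        simp only [Real.norm_eq_abs, sq_abs] at this
        have h1 : Real.sqrt ((p 0)^2 + (p 1)^2) ≤ α := by
          rw [← this]; exact hnorm
        calc (p 0)^2 + (p 1)^2 = Real.sqrt ((p 0)^2 + (p 1)^2)^2 := by
              rw [Real.sq_sqrt (by positivity)]
          _ ≤ α^2 := by nlinarith [Real.sqrt_nonneg ((p 0)^2 + (p 1)^2)]
      simp only [Set.mem_setOf_eq]
      have key : s * p 1 + (α/2) * p 0 ≤ α := by
        nlinarith [sq_nonneg (s * p 0 - (α/2) * p 1), sq_nonneg (s * p 1 + (α/2) * p 0 - α)]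
      rw [ht, ← sub_nonneg]
      have heq : 2*(α/2/s) - (p 1 + α/2/s * p 0) = (α - (s * p 1 + (α/2) * p 0))/s := by
        field_simp
      rw [heq]
      exact div_nonneg (by linarith) hspos.le
    · simp only [Set.mem_singleton_iff] at hp
      subst hp
      simp only [Set.mem_setOf_eq, pt_apply0, pt_apply1]
      linarith
  have hfinal := convexHull_min hsubset hconv hhull
  simp only [Set.mem_setOf_eq, pt_apply0, pt_apply1] at hfinal
  have : α' * b ≤ (2 - c) * t := by linarith [mul_le_mul_of_nonneg_left hc (le_of_lt htpos)]
  calc α' * b ≤ (2 - c) * t := this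
    _ = (2 - c) * (α/2) / s := by rw [ht, mul_div_assoc]
end
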